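/- arXiv:1006.5301 — 2 statements merged into one kernel-verified Lean document; each statement's English description precedes it below -/
import Mathlib

section
/- Let A be a hereditary artin algebra and let X be an indecomposable, finitely generated right A-module that is exceptional (i.e. Ext^1_A(X,X) = 0). Then the endomorphism ring End_A(X) is a division ring. -/
/-!
STATEMENT 0: Let `A` be a hereditary artin algebra and `X` an indecomposable, finitely
generated, exceptional (`Ext¹_A(X,X) = 0`) right `A`-module.  Then `End_A(X)` is a
division ring.

Right `A`-modules are formalized as modules over `Aᵐᵒᵖ`.
-/

universe u

/-- `Ext¹(X,Y) = 0` over the ring `A`: every short exact sequence `0 → Y → E → X → 0`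
of `A`-modules splits. -/
def Ext1Vanishes (A : Type u) [Ring A] (X : Type u) [AddCommGroup X] [Module A X]
    (Y : Type u) [AddCommGroup Y] [Module A Y] : Prop :=
  ∀ (E : ModuleCat.{u} A) (f : Y →ₗ[A] E) (g : E →ₗ[A] X),
    Function.Injective f → Function.Surjective g →
      LinearMap.range f = LinearMap.ker g →
      ∃ s : X →ₗ[A] E, g ∘ₗ s = LinearMap.id

/-- `A` is right hereditary: every submodule of a projective right `A`-module
(= `Aᵐᵒᵖ`-module) is projective. -/
def RightHereditary (A : Type u) [Ring A] : Prop :=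
  ∀ (M : ModuleCat.{u} Aᵐᵒᵖ), Module.Projective Aᵐᵒᵖ M →
    ∀ N : Submodule Aᵐᵒᵖ M, Module.Projective Aᵐᵒᵖ N

/-- A module is indecomposable: it is non-zero and has no non-trivial direct summand. -/
def IndecomposableModule (A : Type u) [Ring A] (M : Type u) [AddCommGroup M]
    [Module A M] : Prop :=
  Nontrivial M ∧ ∀ N P : Submodule A M, IsCompl N P → N = ⊥ ∨ N = ⊤

/-!
By Fitting's lemma every endomorphism of the indecomposable finite-length module `X` is nilpotent
or bijective, so it suffices to show that a square-zero endomorphism `g` vanishes. Take a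
presentation `π : P → X` with `P` free; heredity makes `F = π⁻¹(im g)` projective, so `π|_F` lifts
through `g` to some `l : F → X`. As `Ext¹(X, X) = 0`, the restriction of `l` to `ker π` extends to
`μ : P → X`, and `g μ` descends to `e : X → X`. The difference `μ - l` vanishes on `ker π`, hence
factors through `im g`, which yields `c : X → X` with `ker g ≤ ker c` and `g (1 + c) = e g`.
Neither `e` (its image lies in `im g ≠ X`) nor `c` (it kills `im g ≠ 0`) is bijective, so both
are nilpotent, and `g (1 + c)ᴺ = eᴺ g = 0` forces `g = 0`.
-/

open LinearMap Submodule

theorem LinearMap.exists_comp_eq_of_ker_le {R M N Q : Type*} [Ring R] [AddCommGroup M]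
    [AddCommGroup N] [AddCommGroup Q] [Module R M] [Module R N] [Module R Q]
    {p : M →ₗ[R] N} (hp : Function.Surjective p) (φ : M →ₗ[R] Q) (h : ker p ≤ ker φ) :
    ∃ ψ : N →ₗ[R] Q, ψ ∘ₗ p = φ := by
  refine ⟨(ker p).liftQ φ h ∘ₗ (p.quotKerEquivOfSurjective hp).symm.toLinearMap, ?_⟩
  ext x
  have hx : (p.quotKerEquivOfSurjective hp).symm (p x) = (ker p).mkQ x :=
    (LinearEquiv.symm_apply_eq _).mpr rfl
  simp [hx]

theorem SemiconjBy.eq_zero_of_isNilpotent {R : Type*} [Ring R] {g c e : R}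
    (h : SemiconjBy g (1 + c) e) (hc : IsNilpotent c) (he : IsNilpotent e) : g = 0 := by
  obtain ⟨n, hn⟩ := he
  have hpow : g * (1 + c) ^ n = e ^ n * g := (h.pow_right n).eq
  rw [hn, zero_mul] at hpow
  exact (hc.isUnit_one_add.pow n).mul_left_eq_zero.mp hpow

theorem IndecomposableModule.isNilpotent_or_bijective {R M : Type u} [Ring R] [AddCommGroup M]
    [Module R M] [IsArtinian R M] [IsNoetherian R M] (hM : IndecomposableModule R M)
    (f : Module.End R M) : IsNilpotent f ∨ Function.Bijective f := by
  obtain ⟨m, hm, hm1⟩ :=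
    (f.eventually_isCompl_ker_pow_range_pow.and (Filter.eventually_ge_atTop 1)).exists
  rcases hM.2 _ _ hm with hker | hker
  · refine .inr (IsArtinian.bijective_of_injective_endomorphism f ?_)
    rw [← ker_eq_bot, eq_bot_iff, ← hker]
    obtain ⟨m, rfl⟩ := Nat.exists_eq_add_of_le' hm1
    rw [pow_succ]
    exact ker_le_ker_comp f _
  · exact .inl ⟨m, ker_eq_top.mp hker⟩

/-- The pushout of a presentation `0 → ker π → P → X → 0` along `φ : ker π → Y` is an extension
of `X` by `Y`; its splitting extends `φ` to `P`. -/
theorem Ext1Vanishes.exists_comp_subtype_eq {R X Y P : Type u} [Ring R] [AddCommGroup X]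
    [Module R X] [AddCommGroup Y] [Module R Y] [AddCommGroup P] [Module R P]
    (hXY : Ext1Vanishes R X Y) {π : P →ₗ[R] X} (hπ : Function.Surjective π)
    (φ : ker π →ₗ[R] Y) : ∃ μ : P →ₗ[R] Y, μ ∘ₗ (ker π).subtype = φ := by
  set W := range ((ker π).subtype.prod (-φ))
  have hW : W ≤ ker (π ∘ₗ fst R P Y) := by
    rintro _ ⟨ω, rfl⟩
    exact ω.2
  set α : Y →ₗ[R] (P × Y) ⧸ W := W.mkQ ∘ₗ inr R P Y
  set β : (P × Y) ⧸ W →ₗ[R] X := W.liftQ (π ∘ₗ fst R P Y) hW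
  have hmk : ∀ (p : P) (hp : p ∈ ker π) (y : Y), W.mkQ (p, y) = α (y + φ ⟨p, hp⟩) := by
    intro p hp y
    refine (Submodule.Quotient.eq _).mpr ⟨⟨p, hp⟩, ?_⟩
    ext <;> simp
  have hα : Function.Injective α := by
    refine (injective_iff_map_eq_zero α).mpr fun y hy => ?_
    obtain ⟨ω, hω⟩ := (Submodule.Quotient.mk_eq_zero W).mp hy
    obtain rfl : ω = 0 := Subtype.ext (congrArg Prod.fst hω)
    simpa using (congrArg Prod.snd hω).symm
  have hβ : Function.Surjective β := fun x =>
    let ⟨p, hp⟩ := hπ x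
    ⟨W.mkQ (p, 0), hp⟩
  have hexact : Function.Exact α β := by
    intro e
    obtain ⟨⟨p, y⟩, rfl⟩ := W.mkQ_surjective e
    refine ⟨fun hp => ⟨_, (hmk p hp y).symm⟩, ?_⟩
    rintro ⟨y', hy'⟩
    rw [← hy']
    exact map_zero π
  obtain ⟨s, hs⟩ := hXY (ModuleCat.of R ((P × Y) ⧸ W)) α β hα hβ
    (exact_iff.mp hexact).symm
  obtain ⟨r, hr⟩ : ∃ r, r ∘ₗ α = .id :=
    ((hexact.split_tfae hα hβ).out 0 1).mp (⟨s, hs⟩ : ∃ s, β ∘ₗ s = .id)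
  refine ⟨r ∘ₗ W.mkQ ∘ₗ inl R P Y, LinearMap.ext fun ω => ?_⟩
  simpa [hmk ω ω.2 0] using LinearMap.congr_fun hr (φ ω)

theorem Ext1Vanishes.exists_semiconjBy {R X P : Type u} [Ring R] [AddCommGroup X] [Module R X]
    [AddCommGroup P] [Module R P] (hX : Ext1Vanishes R X X) {π : P →ₗ[R] X}
    (hπ : Function.Surjective π) (g : Module.End R X)
    [Module.Projective R (comap π (range g))] :
    ∃ e c : Module.End R X, SemiconjBy g (1 + c) e ∧ range e ≤ range g ∧ ker g ≤ ker c := by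
  set F := comap π (range g)
  set π' : F →ₗ[R] range g := π.restrict fun _ h => h
  have hπ' : Function.Surjective π' := by
    rintro ⟨_, ⟨x, rfl⟩⟩
    obtain ⟨p, hp⟩ := hπ (g x)
    exact ⟨⟨p, ⟨x, hp.symm⟩⟩, Subtype.ext hp⟩
  obtain ⟨l, hl⟩ :=
    Module.projective_lifting_property g.rangeRestrict π' g.surjective_rangeRestrict
  have hgl : ∀ w : F, g (l w) = π w := fun w => congrArg Subtype.val (LinearMap.congr_fun hl w)
  have hK : ker π ≤ F := fun p hp => by simp [F, mem_ker.mp hp]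
  obtain ⟨μ, hμ⟩ := hX.exists_comp_subtype_eq hπ (l ∘ₗ inclusion hK)
  have hμl : ∀ (p : P) (hp : p ∈ ker π), μ p = l ⟨p, hK hp⟩ :=
    fun p hp => LinearMap.congr_fun hμ ⟨p, hp⟩
  obtain ⟨e, he⟩ := exists_comp_eq_of_ker_le hπ (g ∘ₗ μ) fun p hp => by
    simp [hμl p hp, hgl, mem_ker.mp hp]
  obtain ⟨h, hh⟩ := exists_comp_eq_of_ker_le hπ' (μ ∘ₗ F.subtype - l) fun w hw => by
    simp [hμl w (congrArg Subtype.val hw)]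
  refine ⟨e, h ∘ₗ g.rangeRestrict, LinearMap.ext fun x => ?_, ?_, fun x hx => ?_⟩
  · obtain ⟨w, hw⟩ := hπ' (g.rangeRestrict x)
    have hwx : π w = g x := congrArg Subtype.val hw
    have hμw : μ w = l w + h (g.rangeRestrict x) := by
      rw [← hw, ← LinearMap.comp_apply h π', hh]
      simp
    calc g (x + h (g.rangeRestrict x)) = g (μ w) := by rw [hμw, map_add, map_add, hgl, hwx]
      _ = e (g x) := by rw [← hwx, ← LinearMap.comp_apply e π, he]; rfl
  · rintro _ ⟨x, rfl⟩
    obtain ⟨p, rfl⟩ := hπ x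
    exact ⟨μ p, (LinearMap.congr_fun he p).symm⟩
  · have hx' : g.rangeRestrict x = 0 := Subtype.ext (mem_ker.mp hx)
    simp [hx']

theorem Ext1Vanishes.eq_zero_of_mul_self_eq_zero {R X P : Type u} [Ring R] [AddCommGroup X]
    [Module R X] [IsArtinian R X] [IsNoetherian R X] [AddCommGroup P] [Module R P]
    (hind : IndecomposableModule R X) (hX : Ext1Vanishes R X X) {π : P →ₗ[R] X}
    (hπ : Function.Surjective π) {g : Module.End R X} [Module.Projective R (comap π (range g))]
    (hg : g * g = 0) : g = 0 := by
  obtain ⟨e, c, hsemiconj, he, hc⟩ := hX.exists_semiconjBy hπ g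
  by_contra hg0
  have hrange : range g ≤ ker g := range_le_ker_iff.mpr hg
  have hker : ker g ≠ ⊤ := mt ker_eq_top.mp hg0
  have hrange' : range g ≠ ⊥ := mt range_eq_bot.mp hg0
  refine hg0 (hsemiconj.eq_zero_of_isNilpotent ?_ ?_)
  · refine (hind.isNilpotent_or_bijective c).resolve_right fun hbij => hrange' ?_
    exact eq_bot_iff.mpr (hrange.trans (hc.trans (ker_eq_bot.mpr hbij.1).le))
  · refine (hind.isNilpotent_or_bijective e).resolve_right fun hbij => hker ?_
    exact eq_top_iff.mpr ((range_eq_top.mpr hbij.2).symm.trans_le (he.trans hrange))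

/-- The endomorphism ring of an indecomposable finitely generated exceptional module over a
hereditary artin algebra is a division ring (every non-zero endomorphism is invertible). -/
theorem endo_of_indec_exceptional_is_division_ring
    (k : Type u) [CommRing k] [IsArtinianRing k]
    (A : Type u) [Ring A] [Algebra k A] [Module.Finite k A]
    (hA : RightHereditary A)
    (X : Type u) [AddCommGroup X] [Module Aᵐᵒᵖ X] [Module.Finite Aᵐᵒᵖ X]
    (hind : IndecomposableModule Aᵐᵒᵖ X)
    (hexc : Ext1Vanishes Aᵐᵒᵖ X X) :
    Nontrivial (Module.End Aᵐᵒᵖ X) ∧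
      ∀ f : Module.End Aᵐᵒᵖ X, f ≠ 0 → IsUnit f := by
  have : IsArtinianRing Aᵐᵒᵖ := .of_finite k Aᵐᵒᵖ
  obtain ⟨n, π, hπ⟩ := Module.Finite.exists_fin' Aᵐᵒᵖ X
  have hred : IsReduced (Module.End Aᵐᵒᵖ X) := by
    refine (isReduced_iff_pow_one_lt 2 one_lt_two).mpr fun g hg => ?_
    have : Module.Projective Aᵐᵒᵖ (comap π (range g)) :=
      hA (ModuleCat.of Aᵐᵒᵖ (Fin n → Aᵐᵒᵖ)) inferInstance _
    exact hexc.eq_zero_of_mul_self_eq_zero hind hπ (g := g) (by rwa [sq] at hg)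
  have := hind.1
  refine ⟨inferInstance, fun f hf => ?_⟩
  rcases hind.isNilpotent_or_bijective f with hnil | hbij
  · exact absurd hnil.eq_zero hf
  · exact (Module.End.isUnit_iff f).mpr hbij
end

section
/- Let R be a non-zero commutative semihereditary ring such that for every non-zero finitely generated projective R-module P, the trace of P in R equals R. Then R is an integral domain. -/
/-!
If `a * b = 0` with `a ≠ 0`, the principal ideal `aR` is a non-zero finitely generated projective
module killed by `b`. Whatever annihilates a module annihilates its trace ideal, so `b` kills
`traceIn R (aR) = R`, i.e. `b = 0`.
-/

universe u

/-- The trace of an `R`-module `P` in `R`: the sum of the images of all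
`R`-homomorphisms `P → R`. -/
def traceIn (R : Type u) [CommRing R] (P : Type u) [AddCommGroup P] [Module R P] :
    Ideal R :=
  ⨆ f : P →ₗ[R] R, LinearMap.range f

section Trace

variable {R : Type u} [CommRing R] {P : Type u} [AddCommGroup P] [Module R P]

theorem annihilator_le_annihilator_traceIn :
    Module.annihilator R P ≤ (traceIn R P).annihilator := by
  rw [traceIn, Submodule.annihilator_iSup]
  exact le_iInf fun f ↦ f.rangeRestrict.annihilator_le_of_surjective f.surjective_rangeRestrict

theorem annihilator_eq_bot_of_traceIn_eq_top (h : traceIn R P = ⊤) :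
    Module.annihilator R P = ⊥ := by
  refine le_bot_iff.mp (annihilator_le_annihilator_traceIn.trans ?_)
  rw [h, Submodule.annihilator_top, Module.annihilator_eq_bot.mpr inferInstance]

end Trace

/-- A non-zero commutative semihereditary ring in which every non-zero finitely generated
projective module has full trace is a domain. -/
theorem domain_of_full_traces
    (R : Type u) [CommRing R] [Nontrivial R]
    (hsh : ∀ I : Ideal R, I.FG → Module.Projective R ↥I)
    (htr : ∀ P : ModuleCat.{u} R, Nontrivial ↥P → Module.Finite R ↥P →
      Module.Projective R ↥P → traceIn R ↥P = ⊤) :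
    IsDomain R := by
  refine @NoZeroDivisors.to_isDomain R _ _ ⟨fun {a b} hab ↦ or_iff_not_imp_left.mpr fun ha ↦ ?_⟩
  have hfg : (Ideal.span {a}).FG := Submodule.fg_span_singleton a
  have hne : Nontrivial (Ideal.span {a}) :=
    Submodule.nontrivial_iff_ne_bot.mpr (Ideal.span_singleton_eq_bot.not.mpr ha)
  have hann : Module.annihilator R (Ideal.span {a}) = ⊥ :=
    annihilator_eq_bot_of_traceIn_eq_top <|
      htr (ModuleCat.of R (Ideal.span {a})) hne (Module.Finite.iff_fg.mpr hfg) (hsh _ hfg)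
  have hb : b ∈ Module.annihilator R (Ideal.span {a}) :=
    (Submodule.mem_annihilator_span_singleton a b).mpr (by rw [smul_eq_mul, mul_comm, hab])
  simpa [hann] using hb
end
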